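/- arXiv:1703.07865 — 2 statements merged into one kernel-verified Lean document; each statement's English description precedes it below -/
import Mathlib

section
/- Let n ≥ 2, let L be a real symmetric n×n matrix whose kernel is exactly span(𝟙ₙ), let H = diag(a₁,…,aₙ) with aᵢ > 0, b ∈ ℝⁿ, d ∈ ℝ, and let x⋆ be the unique minimizer of f(x) = ½ xᵀHx + bᵀx over {x : 𝟙ₙᵀx = d}. Then for every x with 𝟙ₙᵀx = d, the vector w = x − x⋆ is the unique solution of the system L H w = Lb + LHx, 𝟙ₙᵀ w = 0. -/
/-!
Moving `x⋆` along a direction `z` with `𝟙ᵀz = 0` keeps it feasible, and a quadratic in `s`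
minimised at `s = 0` has zero linear coefficient; so the gradient `Hx⋆ + b` is orthogonal to
`𝟙ᗮ`, hence a multiple of `𝟙`, and `L` annihilates it. That gives `LH(x − x⋆) = Lb + LHx`.
The difference `u` of two solutions has `LHu = 0`, so `Hu = c𝟙` and `uᵀHu = c 𝟙ᵀu = 0`,
which forces `u = 0` because `H` is positive definite.
-/

open Matrix

noncomputable def quadObjective {ι : Type*} [Fintype ι] (H : Matrix ι ι ℝ) (b x : ι → ℝ) : ℝ :=
  1 / 2 * (x ⬝ᵥ (H *ᵥ x)) + b ⬝ᵥ x

section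

variable {ι : Type*} [Fintype ι]

theorem quadObjective_add_smul {H : Matrix ι ι ℝ} (hH : H.IsSymm) (b x z : ι → ℝ) (s : ℝ) :
    quadObjective H b (x + s • z) =
      quadObjective H b x + s * (z ⬝ᵥ (H *ᵥ x + b)) + s ^ 2 / 2 * (z ⬝ᵥ (H *ᵥ z)) := by
  have hxz : x ⬝ᵥ (H *ᵥ z) = z ⬝ᵥ (H *ᵥ x) := by
    simpa only [hH.eq] using dotProduct_transpose_mulVec H x z
  simp only [quadObjective, mulVec_add, mulVec_smul, add_dotProduct, dotProduct_add,
    smul_dotProduct, dotProduct_smul, smul_eq_mul, hxz, dotProduct_comm b z]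
  ring

theorem eq_zero_of_forall_nonneg_mul_add_mul_sq {α β : ℝ} (h : ∀ s : ℝ, 0 ≤ α * s + β * s ^ 2) :
    α = 0 := by
  have hdisc : discrim β α 0 ≤ 0 := discrim_le_zero fun s => by linarith [h s]
  rw [discrim] at hdisc
  nlinarith [sq_nonneg α]

theorem dotProduct_gradient_eq_zero_of_forall_le {H : Matrix ι ι ℝ} (hH : H.IsSymm)
    {b x z : ι → ℝ} (hmin : ∀ s : ℝ, quadObjective H b x ≤ quadObjective H b (x + s • z)) :
    z ⬝ᵥ (H *ᵥ x + b) = 0 :=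
  eq_zero_of_forall_nonneg_mul_add_mul_sq (β := z ⬝ᵥ (H *ᵥ z) / 2) fun s => by
    linarith [hmin s, quadObjective_add_smul hH b x z s]

theorem exists_eq_smul_one_of_forall_dotProduct_eq_zero {g : ι → ℝ}
    (h : ∀ z, 1 ⬝ᵥ z = 0 → z ⬝ᵥ g = 0) : ∃ c : ℝ, g = c • 1 := by
  set c := (∑ i, g i) / Fintype.card ι
  set z := g - c • 1 with hz
  have hz1 : 1 ⬝ᵥ z = 0 := by
    rcases isEmpty_or_nonempty ι with hι | hι
    · simp
    · simp [z, c, one_dotProduct]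
  have hzz : z ⬝ᵥ z = 0 := by
    conv_lhs => rw [hz]
    rw [dotProduct_sub, dotProduct_smul, h z hz1, dotProduct_comm, hz1, smul_zero, sub_zero]
  exact ⟨c, sub_eq_zero.1 (dotProduct_self_eq_zero.1 hzz)⟩

theorem eq_zero_of_mulVec_eq_smul_one {H : Matrix ι ι ℝ} (hH : H.PosDef) {u : ι → ℝ} {c : ℝ}
    (hu : H *ᵥ u = c • 1) (h1 : 1 ⬝ᵥ u = 0) : u = 0 := by
  by_contra hne
  have hquad := hH.dotProduct_mulVec_pos hne
  rw [star_trivial, hu, dotProduct_smul, dotProduct_comm, h1, smul_zero] at hquad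
  exact lt_irrefl 0 hquad

theorem eq_of_mul_mulVec_eq {L H : Matrix ι ι ℝ}
    (hker : ∀ y, L *ᵥ y = 0 → ∃ c : ℝ, y = c • 1) (hH : H.PosDef) {w w' : ι → ℝ}
    (hw : (L * H) *ᵥ w = (L * H) *ᵥ w') (h1 : 1 ⬝ᵥ w = 1 ⬝ᵥ w') : w = w' := by
  obtain ⟨c, hc⟩ := hker (H *ᵥ (w - w')) <| by
    rw [mulVec_mulVec, mulVec_sub, hw, sub_self]
  exact sub_eq_zero.1 <| eq_zero_of_mulVec_eq_smul_one hH hc <| by rw [dotProduct_sub, h1, sub_self]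

end

theorem error_unique_solution_general
    (n : ℕ)
    (L : Matrix (Fin n) (Fin n) ℝ)
    (hker : ∀ y : Fin n → ℝ, L *ᵥ y = 0 ↔ ∃ c : ℝ, y = c • (fun _ => (1 : ℝ)))
    (a : Fin n → ℝ) (ha : ∀ i, 0 < a i)
    (H : Matrix (Fin n) (Fin n) ℝ) (hH : H = Matrix.diagonal a)
    (b : Fin n → ℝ) (d : ℝ)
    (xstar : Fin n → ℝ)
    (hfeas : (fun _ => (1 : ℝ)) ⬝ᵥ xstar = d)
    (hmin : ∀ x : Fin n → ℝ, (fun _ => (1 : ℝ)) ⬝ᵥ x = d →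
      (1 / 2) * (xstar ⬝ᵥ (H *ᵥ xstar)) + b ⬝ᵥ xstar ≤
      (1 / 2) * (x ⬝ᵥ (H *ᵥ x)) + b ⬝ᵥ x)
    (x : Fin n → ℝ) (hx : (fun _ => (1 : ℝ)) ⬝ᵥ x = d) :
    ((L * H) *ᵥ (x - xstar) = L *ᵥ b + (L * H) *ᵥ x ∧
      (fun _ => (1 : ℝ)) ⬝ᵥ (x - xstar) = 0) ∧
    ∀ w : Fin n → ℝ,
      (L * H) *ᵥ w = L *ᵥ b + (L * H) *ᵥ x →
      (fun _ => (1 : ℝ)) ⬝ᵥ w = 0 →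
      w = x - xstar := by
  subst hH
  have hstat : ∀ z : Fin n → ℝ, (fun _ => (1 : ℝ)) ⬝ᵥ z = 0 → z ⬝ᵥ (diagonal a *ᵥ xstar + b) = 0 :=
    fun z hz => dotProduct_gradient_eq_zero_of_forall_le (isSymm_diagonal a) fun s =>
      hmin _ (by rw [dotProduct_add, dotProduct_smul, hfeas, hz, smul_zero, add_zero])
  have hLgrad : L *ᵥ (diagonal a *ᵥ xstar + b) = 0 :=
    (hker _).2 (exists_eq_smul_one_of_forall_dotProduct_eq_zero hstat)
  have hsol : (L * diagonal a) *ᵥ (x - xstar) = L *ᵥ b + (L * diagonal a) *ᵥ x := by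
    rw [mulVec_add, mulVec_mulVec] at hLgrad
    rw [mulVec_sub]
    linear_combination (norm := module) -hLgrad
  have hsum : (fun _ => (1 : ℝ)) ⬝ᵥ (x - xstar) = 0 := by
    rw [dotProduct_sub, hx, hfeas, sub_self]
  exact ⟨⟨hsol, hsum⟩, fun w hw hw1 => eq_of_mul_mulVec_eq (fun y => (hker y).1)
    (.diagonal ha) (hw.trans hsol.symm) (hw1.trans hsum.symm)⟩

/-- For any feasible `x`, the error `w = x − x⋆` is the unique
solution of the system `LHw = Lb + LHx`, `𝟙ᵀw = 0`. -/
theorem error_unique_solution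
    (n : ℕ) (hn : 2 ≤ n)
    (L : Matrix (Fin n) (Fin n) ℝ)
    (hLsym : L.IsSymm)
    (hker : ∀ y : Fin n → ℝ, L *ᵥ y = 0 ↔ ∃ c : ℝ, y = c • (fun _ => (1 : ℝ)))
    (a : Fin n → ℝ) (ha : ∀ i, 0 < a i)
    (H : Matrix (Fin n) (Fin n) ℝ) (hH : H = Matrix.diagonal a)
    (b : Fin n → ℝ) (d : ℝ)
    (xstar : Fin n → ℝ)
    (hfeas : (fun _ => (1 : ℝ)) ⬝ᵥ xstar = d)
    (hmin : ∀ x : Fin n → ℝ, (fun _ => (1 : ℝ)) ⬝ᵥ x = d →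
      (1 / 2) * (xstar ⬝ᵥ (H *ᵥ xstar)) + b ⬝ᵥ xstar ≤
      (1 / 2) * (x ⬝ᵥ (H *ᵥ x)) + b ⬝ᵥ x)
    (huniq : ∀ y : Fin n → ℝ, (fun _ => (1 : ℝ)) ⬝ᵥ y = d →
      (∀ x : Fin n → ℝ, (fun _ => (1 : ℝ)) ⬝ᵥ x = d →
        (1 / 2) * (y ⬝ᵥ (H *ᵥ y)) + b ⬝ᵥ y ≤ (1 / 2) * (x ⬝ᵥ (H *ᵥ x)) + b ⬝ᵥ x) →
      y = xstar)
    (x : Fin n → ℝ) (hx : (fun _ => (1 : ℝ)) ⬝ᵥ x = d) :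
    ((L * H) *ᵥ (x - xstar) = L *ᵥ b + (L * H) *ᵥ x ∧
      (fun _ => (1 : ℝ)) ⬝ᵥ (x - xstar) = 0) ∧
    ∀ w : Fin n → ℝ,
      (L * H) *ᵥ w = L *ᵥ b + (L * H) *ᵥ x →
      (fun _ => (1 : ℝ)) ⬝ᵥ w = 0 →
      w = x - xstar :=
  error_unique_solution_general n L hker a ha H hH b d xstar hfeas hmin x hx
end

section
/- Let n ≥ 2, let L be a real symmetric positive semidefinite n×n matrix with L𝟙ₙ = 0 whose kernel is exactly span(𝟙ₙ), let H = diag(a₁,…,aₙ) with aᵢ > 0, b ∈ ℝⁿ, d ∈ ℝ, and assume there exists ε ∈ [0,1) such that for every y with 𝟙ₙᵀy = 0, −ε yᵀy ≤ yᵀ(Iₙ − LHL)y ≤ ε yᵀy. Let x⋆ be the unique minimizer of f(x) = ½ xᵀHx + bᵀx over {x : 𝟙ₙᵀx = d}, and let G be a real symmetric n×n matrix satisfying L G = Iₙ − 𝟙ₙ𝟙ₙᵀ/n and G𝟙ₙ = 0 (such G exists and is unique). Define V(x) = (x − x⋆)ᵀ G² (x − x⋆). Then for every q ∈ ℕ and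 every x with 𝟙ₙᵀx = d and x ≠ x⋆, the DANA map Φ_q(x) = x − L ∑_{p=0}^{q} (Iₙ − LHL)^p (Lb + LHx) satisfies V(Φ_q(x)) < V(x). -/
open Matrix Finset

/-!
Put `e = x - x⋆` and `u = G e`. As `e` sums to zero, `L u = e`; optimality of `x⋆` on the
hyperplane makes the gradient `H x⋆ + b` orthogonal to it, so `L (b + H x) = L H L u`. With
`M = I - L H L`, the truncated Neumann series `(∑_{p ≤ q} M ^ p) (I - M) = I - M ^ (q + 1)` gives
`Φ_q(x) - x⋆ = L M ^ (q + 1) u`, hence `V (Φ_q x) = ‖M ^ (q + 1) u‖²` while `V x = ‖u‖² > 0`.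
The symmetric `M` preserves the zero-sum hyperplane and has numerical radius at most `ε` on it,
hence norm at most `ε < 1` there.
-/

namespace Matrix

variable {ι R : Type*} [Fintype ι]

section Symmetric

variable [CommSemiring R]

theorem IsSymm.dotProduct_mulVec_comm {A : Matrix ι ι R} (hA : A.IsSymm) (x y : ι → R) :
    x ⬝ᵥ (A *ᵥ y) = (A *ᵥ x) ⬝ᵥ y := by
  rw [dotProduct_mulVec, ← mulVec_transpose, hA.eq]

theorem IsSymm.dotProduct_mul_self_mulVec {G : Matrix ι ι R} (hG : G.IsSymm) (y : ι → R) :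
    y ⬝ᵥ ((G * G) *ᵥ y) = (G *ᵥ y) ⬝ᵥ (G *ᵥ y) := by
  rw [← mulVec_mulVec, hG.dotProduct_mulVec_comm]

theorem IsSymm.mul_mul_of_isSymm {L H : Matrix ι ι R} (hL : L.IsSymm) (hH : H.IsSymm) :
    (L * H * L).IsSymm := by
  rw [IsSymm, transpose_mul, transpose_mul, hL.eq, hH.eq, Matrix.mul_assoc]

theorem IsSymm.mul_comm_of_isSymm_mul {A B : Matrix ι ι R} (hA : A.IsSymm) (hB : B.IsSymm)
    (hAB : (A * B).IsSymm) : B * A = A * B := by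
  rw [← hAB.eq, transpose_mul, hA.eq, hB.eq]

theorem IsSymm.dotProduct_mulVec_eq_zero {M : Matrix ι ι R} (hM : M.IsSymm) {v y : ι → R}
    (hMv : M *ᵥ v = v) (hy : v ⬝ᵥ y = 0) : v ⬝ᵥ (M *ᵥ y) = 0 := by
  rw [hM.dotProduct_mulVec_comm, hMv, hy]

theorem IsSymm.dotProduct_pow_mulVec_eq_zero [DecidableEq ι] {M : Matrix ι ι R} (hM : M.IsSymm)
    {v y : ι → R} (hMv : M *ᵥ v = v) (hy : v ⬝ᵥ y = 0) (k : ℕ) : v ⬝ᵥ (M ^ k *ᵥ y) = 0 := by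
  induction k with
  | zero => simpa using hy
  | succ k ih => rw [pow_succ', ← mulVec_mulVec]; exact hM.dotProduct_mulVec_eq_zero hMv ih

end Symmetric

section Pseudoinverse

variable [CommRing R] [DecidableEq ι] {L G : Matrix ι ι R} {c : R}

theorem mulVec_mulVec_eq_self_of_mul_eq (hLG : L * G = 1 - c • of fun (_ _ : ι) => (1 : R))
    {y : ι → R} (hy : (fun _ => 1) ⬝ᵥ y = 0) : L *ᵥ (G *ᵥ y) = y := by
  have hJ : (of fun (_ _ : ι) => (1 : R)) *ᵥ y = 0 := funext fun _ => hy
  rw [mulVec_mulVec, hLG, sub_mulVec, one_mulVec, smul_mulVec, hJ, smul_zero, sub_zero]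

theorem IsSymm.mulVec_mulVec_eq_self_of_mul_eq (hL : L.IsSymm) (hG : G.IsSymm)
    (hLG : L * G = 1 - c • of fun (_ _ : ι) => (1 : R)) {y : ι → R}
    (hy : (fun _ => 1) ⬝ᵥ y = 0) : G *ᵥ (L *ᵥ y) = y := by
  have hGL : G * L = L * G :=
    hL.mul_comm_of_isSymm_mul hG (hLG ▸ isSymm_one.sub ((IsSymm.ext fun _ _ => rfl).smul c))
  rw [mulVec_mulVec, hGL, ← mulVec_mulVec, Matrix.mulVec_mulVec_eq_self_of_mul_eq hLG hy]

end Pseudoinverse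

theorem sub_geom_sum_mulVec_mulVec [Ring R] [DecidableEq ι] (A : Matrix ι ι R) (q : ℕ)
    (u : ι → R) : u - (∑ p ∈ range q, (1 - A) ^ p) *ᵥ (A *ᵥ u) = (1 - A) ^ q *ᵥ u := by
  have hgeom := geom_sum_mul_neg (1 - A) q
  rw [sub_sub_cancel] at hgeom
  rw [mulVec_mulVec, hgeom, sub_mulVec, one_mulVec, sub_sub_cancel]

theorem IsSymm.mulVec_eq_zero_of_forall_orthogonal {L : Matrix ι ι ℝ} (hL : L.IsSymm)
    {v w : ι → ℝ} (hLv : L *ᵥ v = 0) (hw : ∀ z, v ⬝ᵥ z = 0 → w ⬝ᵥ z = 0) : L *ᵥ w = 0 := by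
  have hv : v ⬝ᵥ (L *ᵥ (L *ᵥ w)) = 0 := by
    rw [hL.dotProduct_mulVec_comm, hLv, zero_dotProduct]
  rw [← dotProduct_self_eq_zero, ← hL.dotProduct_mulVec_comm]
  exact hw _ hv

/-- `t ↦ f (x₀ + t • z) - f x₀` is a nonnegative quadratic polynomial, so its discriminant, the
square of its linear coefficient, is nonpositive. -/
theorem IsSymm.gradient_dotProduct_eq_zero_of_isMinOn {H : Matrix ι ι ℝ} (hH : H.IsSymm)
    {b v x₀ : ι → ℝ} {d : ℝ}
    (hmin : IsMinOn (fun x => (1 / 2) * (x ⬝ᵥ (H *ᵥ x)) + b ⬝ᵥ x) {x | v ⬝ᵥ x = d} x₀)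
    (hx₀ : v ⬝ᵥ x₀ = d) {z : ι → ℝ} (hz : v ⬝ᵥ z = 0) : (H *ᵥ x₀ + b) ⬝ᵥ z = 0 := by
  have hquad : ∀ t, 0 ≤ (1 / 2 * (z ⬝ᵥ (H *ᵥ z))) * (t * t) + (H *ᵥ x₀ + b) ⬝ᵥ z * t + 0 := by
    intro t
    have hle := isMinOn_iff.mp hmin (x₀ + t • z)
      (by rw [Set.mem_ofPred_eq, dotProduct_add, dotProduct_smul, hx₀, hz, smul_zero, add_zero])
    simp only [mulVec_add, mulVec_smul, dotProduct_add, add_dotProduct, dotProduct_smul,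
      smul_dotProduct, smul_eq_mul] at hle ⊢
    rw [hH.dotProduct_mulVec_comm x₀ z, dotProduct_comm z (H *ᵥ x₀)] at hle
    linarith
  have hdisc := discrim_le_zero hquad
  rw [discrim, mul_zero, sub_zero] at hdisc
  exact pow_eq_zero_iff two_ne_zero |>.mp (le_antisymm hdisc (sq_nonneg _))

/-- Polarization bounds `2 ⟪y, M z⟫` by `ε (‖y‖² + ‖z‖²)`; taking `z = t • M y` gives a quadratic
in `t` that is nonnegative, and its discriminant condition is the claim. -/
theorem IsSymm.dotProduct_mulVec_mulVec_le {M : Matrix ι ι ℝ} (hM : M.IsSymm) {v : ι → ℝ}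
    {ε : ℝ} (hMv : M *ᵥ v = v) (hnum : ∀ y, v ⬝ᵥ y = 0 → |y ⬝ᵥ (M *ᵥ y)| ≤ ε * (y ⬝ᵥ y))
    {y : ι → ℝ} (hy : v ⬝ᵥ y = 0) : (M *ᵥ y) ⬝ᵥ (M *ᵥ y) ≤ ε ^ 2 * (y ⬝ᵥ y) := by
  have hpolar : ∀ z, v ⬝ᵥ z = 0 → 2 * (y ⬝ᵥ (M *ᵥ z)) ≤ ε * (y ⬝ᵥ y + z ⬝ᵥ z) := by
    intro z hz
    have hadd := (abs_le.mp (hnum (y + z) (by rw [dotProduct_add, hy, hz, add_zero]))).2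
    have hsub := (abs_le.mp (hnum (y - z) (by rw [dotProduct_sub, hy, hz, sub_zero]))).1
    have hsymm : z ⬝ᵥ (M *ᵥ y) = y ⬝ᵥ (M *ᵥ z) := by
      rw [hM.dotProduct_mulVec_comm, dotProduct_comm]
    simp only [mulVec_add, mulVec_sub, dotProduct_add, dotProduct_sub, add_dotProduct,
      sub_dotProduct, hsymm, dotProduct_comm z y] at hadd hsub
    linarith
  set α := y ⬝ᵥ y
  set β := (M *ᵥ y) ⬝ᵥ (M *ᵥ y)
  have hquad : ∀ t, 0 ≤ (ε * β) * (t * t) + (-2 * β) * t + ε * α := by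
    intro t
    have h := hpolar (t • M *ᵥ y)
      (by rw [dotProduct_smul, hM.dotProduct_mulVec_eq_zero hMv hy, smul_zero])
    simp only [mulVec_smul, dotProduct_smul, smul_dotProduct, smul_eq_mul,
      hM.dotProduct_mulVec_comm y (M *ᵥ y)] at h
    linarith
  have hdisc := discrim_le_zero hquad
  have hα : 0 ≤ α := Fintype.sum_nonneg fun i => mul_self_nonneg (y i)
  rw [discrim] at hdisc
  by_contra! hlt
  have hβ : 0 < β := lt_of_le_of_lt (by positivity) hlt
  nlinarith [mul_lt_mul_of_pos_left hlt hβ]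

theorem IsSymm.dotProduct_pow_mulVec_le [DecidableEq ι] {M : Matrix ι ι ℝ} (hM : M.IsSymm)
    {v : ι → ℝ} {ε : ℝ} (hMv : M *ᵥ v = v)
    (hnum : ∀ y, v ⬝ᵥ y = 0 → |y ⬝ᵥ (M *ᵥ y)| ≤ ε * (y ⬝ᵥ y)) {y : ι → ℝ} (hy : v ⬝ᵥ y = 0)
    (k : ℕ) : (M ^ k *ᵥ y) ⬝ᵥ (M ^ k *ᵥ y) ≤ (ε ^ 2) ^ k * (y ⬝ᵥ y) := by
  induction k with
  | zero => simp
  | succ k ih =>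
    rw [pow_succ', ← mulVec_mulVec, pow_succ', mul_assoc]
    calc _ ≤ ε ^ 2 * ((M ^ k *ᵥ y) ⬝ᵥ (M ^ k *ᵥ y)) :=
          hM.dotProduct_mulVec_mulVec_le hMv hnum (hM.dotProduct_pow_mulVec_eq_zero hMv hy k)
      _ ≤ ε ^ 2 * ((ε ^ 2) ^ k * (y ⬝ᵥ y)) := by gcongr

end Matrix

section DANA

variable {ι R : Type*} [Fintype ι] [DecidableEq ι] [Ring R]

def danaMap (L H : Matrix ι ι R) (b : ι → R) (q : ℕ) (x : ι → R) : ι → R :=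
  x - L *ᵥ ((∑ p ∈ range (q + 1), (1 - L * H * L) ^ p) *ᵥ (L *ᵥ b + (L * H) *ᵥ x))

theorem danaMap_sub_eq {L H : Matrix ι ι R} {b x₀ x u : ι → R} (q : ℕ)
    (hgrad : L *ᵥ (H *ᵥ x₀ + b) = 0) (hLu : L *ᵥ u = x - x₀) :
    danaMap L H b q x - x₀ = L *ᵥ ((1 - L * H * L) ^ (q + 1) *ᵥ u) := by
  have hforce : L *ᵥ b + (L * H) *ᵥ x = (L * H * L) *ᵥ u :=
    calc L *ᵥ b + (L * H) *ᵥ x = L *ᵥ (H *ᵥ x + b) - L *ᵥ (H *ᵥ x₀ + b) := by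
          rw [hgrad, sub_zero, mulVec_add, mulVec_mulVec, add_comm]
      _ = (L * H) *ᵥ (x - x₀) := by
          rw [← mulVec_sub, add_sub_add_right_eq_sub, ← mulVec_sub, mulVec_mulVec]
      _ = (L * H * L) *ᵥ u := by rw [← hLu, mulVec_mulVec]
  rw [danaMap, hforce, ← sub_geom_sum_mulVec_mulVec, mulVec_sub, hLu]
  abel

end DANA

theorem dana_lyapunov_decrease_general
    (n : ℕ)
    (L H : Matrix (Fin n) (Fin n) ℝ)
    (a : Fin n → ℝ) (hH : H = Matrix.diagonal a)
    (hLsym : L.IsSymm)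
    (hL1 : L *ᵥ (fun _ => (1 : ℝ)) = 0)
    (b : Fin n → ℝ) (d : ℝ)
    (ε : ℝ) (hε0 : 0 ≤ ε) (hε1 : ε < 1)
    (heig : ∀ y : Fin n → ℝ, (fun _ => (1 : ℝ)) ⬝ᵥ y = 0 →
      -(ε * (y ⬝ᵥ y)) ≤ y ⬝ᵥ ((1 - L * H * L) *ᵥ y) ∧
      y ⬝ᵥ ((1 - L * H * L) *ᵥ y) ≤ ε * (y ⬝ᵥ y))
    (xstar : Fin n → ℝ)
    (hfeas : (fun _ => (1 : ℝ)) ⬝ᵥ xstar = d)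
    (hmin : ∀ x : Fin n → ℝ, (fun _ => (1 : ℝ)) ⬝ᵥ x = d →
      (1 / 2) * (xstar ⬝ᵥ (H *ᵥ xstar)) + b ⬝ᵥ xstar ≤
      (1 / 2) * (x ⬝ᵥ (H *ᵥ x)) + b ⬝ᵥ x)
    (G : Matrix (Fin n) (Fin n) ℝ)
    (hGsym : G.IsSymm)
    (hLG : L * G = 1 - (n : ℝ)⁻¹ • (Matrix.of fun (_ : Fin n) (_ : Fin n) => (1 : ℝ)))
    (hG1 : G *ᵥ (fun _ => (1 : ℝ)) = 0)
    (V : (Fin n → ℝ) → ℝ)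
    (hV : ∀ x : Fin n → ℝ, V x = (x - xstar) ⬝ᵥ ((G * G) *ᵥ (x - xstar))) :
    ∀ q : ℕ, ∀ x : Fin n → ℝ, (fun _ => (1 : ℝ)) ⬝ᵥ x = d → x ≠ xstar →
      V (x - L *ᵥ ((∑ p ∈ Finset.range (q + 1), (1 - L * H * L) ^ p) *ᵥ
        (L *ᵥ b + (L * H) *ᵥ x))) < V x := by
  intro q x hx hne
  change V (danaMap L H b q x) < V x
  have hHsym : H.IsSymm := hH ▸ isSymm_diagonal a
  have hMsym : (1 - L * H * L).IsSymm := isSymm_one.sub (hLsym.mul_mul_of_isSymm hHsym)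
  have hM1 : (1 - L * H * L) *ᵥ (fun _ => (1 : ℝ)) = fun _ => 1 := by
    rw [sub_mulVec, one_mulVec, ← mulVec_mulVec, hL1, mulVec_zero, sub_zero]
  have hgrad : L *ᵥ (H *ᵥ xstar + b) = 0 := hLsym.mulVec_eq_zero_of_forall_orthogonal hL1
    fun _ hz => hHsym.gradient_dotProduct_eq_zero_of_isMinOn (isMinOn_iff.mpr hmin) hfeas hz
  have he : (fun _ => (1 : ℝ)) ⬝ᵥ (x - xstar) = 0 := by rw [dotProduct_sub, hx, hfeas, sub_self]
  set u := G *ᵥ (x - xstar)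
  have hu : (fun _ => (1 : ℝ)) ⬝ᵥ u = 0 := by
    rw [hGsym.dotProduct_mulVec_comm, hG1, zero_dotProduct]
  have hLu : L *ᵥ u = x - xstar := mulVec_mulVec_eq_self_of_mul_eq hLG he
  have hu0 : u ≠ 0 := fun hu0 => hne (by rw [← sub_eq_zero, ← hLu, hu0, mulVec_zero])
  have hupos : 0 < u ⬝ᵥ u := by simpa only [star_trivial] using dotProduct_self_star_pos_iff.mpr hu0
  rw [hV, hV, danaMap_sub_eq q hgrad hLu, hGsym.dotProduct_mul_self_mulVec,
    hGsym.dotProduct_mul_self_mulVec, hLsym.mulVec_mulVec_eq_self_of_mul_eq hGsym hLG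
      (hMsym.dotProduct_pow_mulVec_eq_zero hM1 hu (q + 1))]
  calc _ ≤ (ε ^ 2) ^ (q + 1) * (u ⬝ᵥ u) :=
        hMsym.dotProduct_pow_mulVec_le hM1 (fun y hy => abs_le.mpr (heig y hy)) hu (q + 1)
    _ < u ⬝ᵥ u := mul_lt_of_lt_one_left hupos
        (pow_lt_one₀ (sq_nonneg ε) (by nlinarith) (Nat.succ_ne_zero q))

/-- The Lyapunov function `V(x) = (x − x⋆)ᵀ G² (x − x⋆)`, with `G`
the pseudoinverse of `L`, strictly decreases along the DANA dynamics at every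
feasible `x ≠ x⋆`, for every inner parameter `q`. -/
theorem dana_lyapunov_decrease
    (n : ℕ) (hn : 2 ≤ n)
    (L H : Matrix (Fin n) (Fin n) ℝ)
    (a : Fin n → ℝ) (ha : ∀ i, 0 < a i) (hH : H = Matrix.diagonal a)
    (hLsym : L.IsSymm) (hLpsd : L.PosSemidef)
    (hL1 : L *ᵥ (fun _ => (1 : ℝ)) = 0)
    (hker : ∀ y : Fin n → ℝ, L *ᵥ y = 0 ↔ ∃ c : ℝ, y = c • (fun _ => (1 : ℝ)))
    (b : Fin n → ℝ) (d : ℝ)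
    (ε : ℝ) (hε0 : 0 ≤ ε) (hε1 : ε < 1)
    (heig : ∀ y : Fin n → ℝ, (fun _ => (1 : ℝ)) ⬝ᵥ y = 0 →
      -(ε * (y ⬝ᵥ y)) ≤ y ⬝ᵥ ((1 - L * H * L) *ᵥ y) ∧
      y ⬝ᵥ ((1 - L * H * L) *ᵥ y) ≤ ε * (y ⬝ᵥ y))
    (xstar : Fin n → ℝ)
    (hfeas : (fun _ => (1 : ℝ)) ⬝ᵥ xstar = d)
    (hmin : ∀ x : Fin n → ℝ, (fun _ => (1 : ℝ)) ⬝ᵥ x = d →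
      (1 / 2) * (xstar ⬝ᵥ (H *ᵥ xstar)) + b ⬝ᵥ xstar ≤
      (1 / 2) * (x ⬝ᵥ (H *ᵥ x)) + b ⬝ᵥ x)
    (huniq : ∀ y : Fin n → ℝ, (fun _ => (1 : ℝ)) ⬝ᵥ y = d →
      (∀ x : Fin n → ℝ, (fun _ => (1 : ℝ)) ⬝ᵥ x = d →
        (1 / 2) * (y ⬝ᵥ (H *ᵥ y)) + b ⬝ᵥ y ≤ (1 / 2) * (x ⬝ᵥ (H *ᵥ x)) + b ⬝ᵥ x) →
      y = xstar)
    (G : Matrix (Fin n) (Fin n) ℝ)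
    (hGsym : G.IsSymm)
    (hLG : L * G = 1 - (n : ℝ)⁻¹ • (Matrix.of fun (_ : Fin n) (_ : Fin n) => (1 : ℝ)))
    (hG1 : G *ᵥ (fun _ => (1 : ℝ)) = 0)
    (V : (Fin n → ℝ) → ℝ)
    (hV : ∀ x : Fin n → ℝ, V x = (x - xstar) ⬝ᵥ ((G * G) *ᵥ (x - xstar))) :
    ∀ q : ℕ, ∀ x : Fin n → ℝ, (fun _ => (1 : ℝ)) ⬝ᵥ x = d → x ≠ xstar →
      V (x - L *ᵥ ((∑ p ∈ Finset.range (q + 1), (1 - L * H * L) ^ p) *ᵥ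
        (L *ᵥ b + (L * H) *ᵥ x))) < V x :=
  dana_lyapunov_decrease_general n L H a hH hLsym hL1 b d ε hε0 hε1 heig xstar hfeas hmin G hGsym
    hLG hG1 V hV
end
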